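/- Suppose nonnegative reals a_t, b_t satisfy η·a_t ≤ (1 + c)·b_t - b_{t+1} + c·σ² for t = 0,...,T-1, where c = Λ²η², η > 0, Λ > 0, σ² ≥ 0. Define γ_t = (1 + c)^{-(t+1)}. Then Σ_{t=0}^{T-1} γ_t η a_t ≤ b_0 + Λ²σ² Σ_{t=0}^{T-1} γ_t η². -/

import Mathlib

theorem stmt_3 (T : ℕ) (hT : 1 ≤ T) (η Λ σsq : ℝ) (hη : 0 < η) (hΛ : 0 < Λ)
    (hσ : 0 ≤ σsq) (a b : ℕ → ℝ) (ha : ∀ t, 0 ≤ a t) (hb : ∀ t, 0 ≤ b t)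
    (hrec : ∀ t < T, η * a t ≤ (1 + Λ ^ 2 * η ^ 2) * b t - b (t + 1) + (Λ ^ 2 * η ^ 2) * σsq) :
    ∑ t ∈ Finset.range T, ((1 + Λ ^ 2 * η ^ 2) ^ (t + 1))⁻¹ * η * a t ≤
      b 0 + Λ ^ 2 * σsq * ∑ t ∈ Finset.range T, ((1 + Λ ^ 2 * η ^ 2) ^ (t + 1))⁻¹ * η ^ 2 := by
  set c : ℝ := Λ ^ 2 * η ^ 2 with hc
  have hcpos : 0 < c := by positivity
  have h1c : (0:ℝ) < 1 + c := by linarith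
  have key : ∀ S : ℕ, (∀ t < S, η * a t ≤ (1 + c) * b t - b (t + 1) + c * σsq) →
      ∑ t ∈ Finset.range S, ((1 + c) ^ (t + 1))⁻¹ * η * a t + ((1 + c) ^ S)⁻¹ * b S ≤
        b 0 + Λ ^ 2 * σsq * ∑ t ∈ Finset.range S, ((1 + c) ^ (t + 1))⁻¹ * η ^ 2 := by
    intro S
    induction S with
    | zero => intro _; simp
    | succ n ih =>
      intro hr
      have ihn := ih (fun t ht => hr t (Nat.lt_succ_of_lt ht))
      have hrn := hr n (Nat.lt_succ_self n)
      rw [Finset.sum_range_succ, Finset.sum_range_succ]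
      have hγ : (0:ℝ) < ((1 + c) ^ (n + 1))⁻¹ := by positivity
      have hmul : ((1 + c) ^ (n + 1))⁻¹ * (η * a n) ≤
          ((1 + c) ^ (n + 1))⁻¹ * ((1 + c) * b n - b (n + 1) + c * σsq) :=
        mul_le_mul_of_nonneg_left hrn hγ.le
      have hpow : ((1 + c) ^ (n + 1))⁻¹ * ((1 + c) * b n) = ((1 + c) ^ n)⁻¹ * b n := by
        rw [pow_succ]
        field_simp
      have hcs : ((1 + c) ^ (n + 1))⁻¹ * (c * σsq) =
          Λ ^ 2 * σsq * (((1 + c) ^ (n + 1))⁻¹ * η ^ 2) := by rw [hc]; ring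
      nlinarith [hmul, hpow, hcs, ihn]
  have hfin := key T hrec
  have hb' : 0 ≤ ((1 + c) ^ T)⁻¹ * b T := mul_nonneg (by positivity) (hb T)
  linarith
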